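/- If the mean-square amplification factor satisfies $|a(\theta)+c(\theta)|^2 + |b(\theta)|^2 + 2|c(\theta)|^2 \le 1$ for all $\theta$, then $\mu^2 k \le 1-\rho$ and $k/h^2 \le (1+2\rho^2)^{-1}$; i.e., the two stability conditions are necessary as well as sufficient. -/

import Mathlib

/-!
Write `t = sin² (θ/2)` and `λ = k / h²`. Since `sin² θ = 4 t (1 - t)`, the mean-square
amplification factor equals `1 + 4 λ t ((1 - t)(μ² k + ρ) + t λ (1 + 2ρ²) - 1)`, so stability
says that the affine function `t ↦ (1 - t)(μ² k + ρ) + t λ (1 + 2ρ²)` is at most `1` on `(0, 1]`.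
Its limit at `0` and its value at `1` give the two conditions.
-/

open Complex Filter Topology Set

lemma Real.sin_sq_eq_four_mul_sin_sq_half (θ : ℝ) :
    Real.sin θ ^ 2 = 4 * Real.sin (θ / 2) ^ 2 * (1 - Real.sin (θ / 2) ^ 2) := by
  conv_lhs => rw [← mul_div_cancel₀ θ two_ne_zero, Real.sin_two_mul]
  rw [← Real.cos_sq']
  ring

lemma Real.exists_sin_sq_half_eq {t : ℝ} (ht : t ∈ Icc (0 : ℝ) 1) :
    ∃ θ : ℝ, Real.sin (θ / 2) ^ 2 = t := by
  have hsqrt : Real.sqrt t ≤ 1 := Real.sqrt_le_one.mpr ht.2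
  refine ⟨2 * Real.arcsin (Real.sqrt t), ?_⟩
  rw [mul_div_cancel_left₀ _ two_ne_zero,
    Real.sin_arcsin (by linarith [Real.sqrt_nonneg t]) hsqrt, Real.sq_sqrt ht.1]

lemma le_one_of_forall_mem_Ioc {A B : ℝ} (h : ∀ t ∈ Ioc (0 : ℝ) 1, (1 - t) * A + t * B ≤ 1) :
    A ≤ 1 ∧ B ≤ 1 := by
  refine ⟨?_, by simpa using h 1 (right_mem_Ioc.mpr one_pos)⟩
  have hlim : Tendsto (fun t : ℝ ↦ (1 - t) * A + t * B) (𝓝[>] 0) (𝓝 ((1 - 0) * A + 0 * B)) :=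
    ((by fun_prop : Continuous fun t : ℝ ↦ (1 - t) * A + t * B).tendsto 0).mono_left
      nhdsWithin_le_nhds
  simpa using le_of_tendsto hlim (eventually_of_mem (Ioc_mem_nhdsGT one_pos) h)

lemma mean_square_amplification_eq {μ ρ k h θ : ℝ} {a b c : ℂ} (hρk : 0 ≤ ρ * k)
    (ha : a = 1 - Complex.I * (μ * k / h) * Real.sin θ
        - (2 * (1 - ρ) * k / h ^ 2) * Real.sin (θ / 2) ^ 2)
    (hb : b = -Complex.I * (Real.sqrt (ρ * k) / h) * Real.sin θ)
    (hc : c = -(2 * ρ * k / h ^ 2) * Real.sin (θ / 2) ^ 2) :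
    ‖a + c‖ ^ 2 + ‖b‖ ^ 2 + 2 * ‖c‖ ^ 2 = 1 + 4 * (k / h ^ 2) * Real.sin (θ / 2) ^ 2 *
      ((1 - Real.sin (θ / 2) ^ 2) * (μ ^ 2 * k + ρ)
        + k / h ^ 2 * Real.sin (θ / 2) ^ 2 * (1 + 2 * ρ ^ 2) - 1) := by
  have hac : a + c = ((1 - 2 * k / h ^ 2 * Real.sin (θ / 2) ^ 2 : ℝ) : ℂ)
      + ((-(μ * k / h * Real.sin θ) : ℝ) : ℂ) * Complex.I := by
    rw [ha, hc]; push_cast; ring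
  have hb' : b = ((0 : ℝ) : ℂ) + ((-(Real.sqrt (ρ * k) / h * Real.sin θ) : ℝ) : ℂ) * Complex.I := by
    rw [hb]; push_cast; ring
  have hc' : c = ((-(2 * ρ * k / h ^ 2 * Real.sin (θ / 2) ^ 2) : ℝ) : ℂ) := by
    rw [hc]; push_cast; ring
  rw [hac, hb', hc', Complex.sq_norm, Complex.sq_norm, Complex.sq_norm, Complex.normSq_add_mul_I,
    Complex.normSq_add_mul_I, Complex.normSq_ofReal]
  simp only [mul_pow, div_pow, neg_sq, Real.sq_sqrt hρk, Real.sin_sq_eq_four_mul_sin_sq_half θ]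
  ring

theorem stmt_4_general (μ ρ k h : ℝ) (hρ0 : 0 ≤ ρ) (hk : 0 < k) (hh : 0 < h)
    (a b c : ℝ → ℂ)
    (ha : ∀ θ, a θ = 1 - Complex.I * (μ * k / h) * Real.sin θ
        - (2 * (1 - ρ) * k / h ^ 2) * Real.sin (θ / 2) ^ 2)
    (hb : ∀ θ, b θ = -Complex.I * (Real.sqrt (ρ * k) / h) * Real.sin θ)
    (hc : ∀ θ, c θ = -(2 * ρ * k / h ^ 2) * Real.sin (θ / 2) ^ 2)
    (hstab : ∀ θ : ℝ,
      ‖a θ + c θ‖ ^ 2 + ‖b θ‖ ^ 2 + 2 * ‖c θ‖ ^ 2 ≤ 1) :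
    μ ^ 2 * k ≤ 1 - ρ ∧ k / h ^ 2 ≤ (1 + 2 * ρ ^ 2)⁻¹ := by
  obtain ⟨hA, hB⟩ : μ ^ 2 * k + ρ ≤ 1 ∧ k / h ^ 2 * (1 + 2 * ρ ^ 2) ≤ 1 := by
    refine le_one_of_forall_mem_Ioc fun t ht ↦ ?_
    obtain ⟨θ, rfl⟩ := Real.exists_sin_sq_half_eq (Ioc_subset_Icc_self ht)
    have hθ := hstab θ
    rw [mean_square_amplification_eq (by positivity) (ha θ) (hb θ) (hc θ)] at hθ
    have hpos : 0 < 4 * (k / h ^ 2) * Real.sin (θ / 2) ^ 2 := mul_pos (by positivity) ht.1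
    nlinarith
  exact ⟨by linarith, by rwa [← one_div, le_div_iff₀ (by positivity)]⟩

/-- Necessity of the two stability conditions for mean-square stability of every
Fourier mode of the Milstein finite difference scheme. -/
theorem stmt_4 (μ ρ k h : ℝ) (hρ0 : 0 ≤ ρ) (hρ1 : ρ ≤ 1) (hk : 0 < k) (hh : 0 < h)
    (a b c : ℝ → ℂ)
    (ha : ∀ θ, a θ = 1 - Complex.I * (μ * k / h) * Real.sin θ
        - (2 * (1 - ρ) * k / h ^ 2) * Real.sin (θ / 2) ^ 2)
    (hb : ∀ θ, b θ = -Complex.I * (Real.sqrt (ρ * k) / h) * Real.sin θ)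
    (hc : ∀ θ, c θ = -(2 * ρ * k / h ^ 2) * Real.sin (θ / 2) ^ 2)
    (hstab : ∀ θ : ℝ,
      ‖a θ + c θ‖ ^ 2 + ‖b θ‖ ^ 2 + 2 * ‖c θ‖ ^ 2 ≤ 1) :
    μ ^ 2 * k ≤ 1 - ρ ∧ k / h ^ 2 ≤ (1 + 2 * ρ ^ 2)⁻¹ :=
  stmt_4_general μ ρ k h hρ0 hk hh a b c ha hb hc hstab
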